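/- Let q0 = 2^s, q = 2q0², with s ≥ 1. Suppose B is an additive subgroup of F_q of order 2^v and A is an additive subgroup of F_q of order 2^{u-v} with A^{2q0+1} := {a^{2q0+1} : a ∈ A} ⊆ B. Then there is a subgroup U of the Sylow 2-subgroup T̄ of Sz(q) of order 2^u with {c : ψ_{0,c} ∈ U} = B and image {a : ψ_{a,c} ∈ U for some c} = A. -/

import Mathlib

/-!
Modulo `B`, the pairing `β(a, b) = a^{2q₀} b` is biadditive (as `x ↦ x^{2q₀}` is additive in
characteristic 2) and alternating on `A`, because `β(a, a) = a^{2q₀+1} ∈ B`. An alternating form on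
an elementary abelian 2-group is the polarization of a quadratic refinement `f : A → F/B`, built one
generator at a time. Since `ψ_{a,c} ψ_{a',c'} = ψ_{a+a', a^{2q₀}a' + c + c'}`, the set
`U = {ψ_{a,c} : a ∈ A, c ≡ f(a) mod B}` is then a subgroup, of order `|A| |B|`.
-/

/-- The map `ψ_{a,c} : (x, y) ↦ (x + a, a^{2q₀} x + y + c)`, an element of the Sylow
2-subgroup `T̄` of the Suzuki group acting on `F × F`. -/
def suzukiPsi {F : Type*} [Field F] (q0 : ℕ) (a c : F) : Equiv.Perm (F × F) where
  toFun p := (p.1 + a, a ^ (2 * q0) * p.1 + p.2 + c)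
  invFun p := (p.1 - a, p.2 - a ^ (2 * q0) * (p.1 - a) - c)
  left_inv p := by
    refine Prod.ext ?_ ?_ <;> dsimp <;> ring
  right_inv p := by
    refine Prod.ext ?_ ?_ <;> dsimp <;> ring

section QuadraticRefinement

variable {V W : Type*} [AddCommGroup V] [AddCommGroup W]

def IsQuadraticRefinementOn (β : V →+ V →+ W) (C : AddSubgroup V) (f : V → W) : Prop :=
  ∀ a ∈ C, ∀ b ∈ C, f (a + b) = f a + f b + β a b

namespace IsQuadraticRefinementOn

variable {β : V →+ V →+ W} {C : AddSubgroup V} {f : V → W}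

lemma map_zero (hf : IsQuadraticRefinementOn β C f) : f 0 = 0 := by
  simpa using hf 0 C.zero_mem 0 C.zero_mem

lemma map_neg (hf : IsQuadraticRefinementOn β C f) {a : V} (ha : a ∈ C) :
    f (-a) = β a a - f a := by
  have h := hf a ha (-a) (C.neg_mem ha)
  rw [add_neg_cancel, hf.map_zero, _root_.map_neg] at h
  linear_combination (norm := abel) -h

end IsQuadraticRefinementOn

lemma AddSubgroup.mem_sup_closure_singleton_iff (hV : ∀ v : V, v + v = 0) {C : AddSubgroup V}
    {x y : V} : y ∈ C ⊔ closure {x} ↔ y ∈ C ∨ ∃ c ∈ C, y = x + c := by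
  constructor
  · rw [mem_sup]
    rintro ⟨c, hc, z, hz, rfl⟩
    obtain ⟨n, rfl⟩ := mem_closure_singleton.mp hz
    rcases Int.even_or_odd' n with ⟨k, rfl | rfl⟩
    · left
      simpa [mul_zsmul, two_zsmul, hV] using hc
    · right
      exact ⟨c, hc, by rw [add_zsmul, mul_zsmul, two_zsmul, hV]; simp [add_comm]⟩
  · rintro (hy | ⟨c, hc, rfl⟩)
    · exact mem_sup_left hy
    · rw [add_comm]
      exact add_mem (mem_sup_left hc) (mem_sup_right (subset_closure rfl))

lemma AddMonoidHom.map_comm_of_map_self_eq_zero (hV : ∀ v : V, v + v = 0) (β : V →+ V →+ W)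
    {a b : V} (ha : β a a = 0) (hb : β b b = 0) (hab : β (a + b) (a + b) = 0) :
    β a b = β b a := by
  have h2 : β b a + β b a = 0 := by rw [← map_add, hV, map_zero]
  simp only [map_add, AddMonoidHom.add_apply, ha, hb] at hab
  rw [← add_right_cancel_iff (a := β b a), h2, ← hab]
  abel

open AddSubgroup in
lemma IsQuadraticRefinementOn.exists_sup_closure_singleton (hV : ∀ v : V, v + v = 0)
    {β : V →+ V →+ W} {C : AddSubgroup V} {f : V → W} (hf : IsQuadraticRefinementOn β C f)
    {x : V} (hβ : ∀ a ∈ C ⊔ closure {x}, β a a = 0) :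
    ∃ f' : V → W, IsQuadraticRefinementOn β (C ⊔ closure {x}) f' := by
  classical
  by_cases hxC : x ∈ C
  · rw [sup_eq_left.mpr ((closure_le C).mpr (Set.singleton_subset_iff.mpr hxC))]
    exact ⟨f, hf⟩
  have hxC' : ∀ c ∈ C, x + c ∉ C := fun c hc h => hxC (by simpa using C.sub_mem h hc)
  let f' : V → W := fun y => if y ∈ C then f y else f (x + y) + β x (x + y)
  have hf'C : ∀ c ∈ C, f' c = f c := fun c hc => if_pos hc
  have hf'x : ∀ c ∈ C, f' (x + c) = f c + β x c := fun c hc => by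
    simp only [f', if_neg (hxC' c hc), ← add_assoc, hV, zero_add]
  have hsymm : ∀ c ∈ C, β c x = β x c := fun c hc =>
    AddMonoidHom.map_comm_of_map_self_eq_zero hV β (hβ c (mem_sup_left hc))
      (hβ x (mem_sup_right (subset_closure rfl)))
      (hβ _ (add_mem (mem_sup_left hc) (mem_sup_right (subset_closure rfl))))
  have htwo : ∀ a b : V, β a b + β a b = 0 := fun a b => by
    rw [← (β a).map_add, hV, (β a).map_zero]
  refine ⟨f', fun a ha' b hb' => ?_⟩
  rcases (mem_sup_closure_singleton_iff hV).mp ha' with ha | ⟨a, ha, rfl⟩ <;>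
    rcases (mem_sup_closure_singleton_iff hV).mp hb' with hb | ⟨b, hb, rfl⟩
  · rw [hf'C _ (C.add_mem ha hb), hf'C a ha, hf'C b hb, hf a ha b hb]
  · rw [add_left_comm, hf'x _ (C.add_mem ha hb), hf'C a ha, hf'x b hb, hf a ha b hb, map_add,
      map_add, ← hsymm a ha]
    abel
  · rw [add_assoc, hf'x _ (C.add_mem ha hb), hf'x a ha, hf'C b hb, hf a ha b hb, map_add,
      map_add, AddMonoidHom.add_apply]
    abel
  · rw [add_add_add_comm, hV, zero_add, hf'C _ (C.add_mem ha hb), hf'x a ha, hf'x b hb,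
      hf a ha b hb]
    simp only [map_add, AddMonoidHom.add_apply, hsymm a ha,
      hβ x (mem_sup_right (subset_closure rfl))]
    linear_combination (norm := abel) -htwo x a - htwo x b

lemma exists_isQuadraticRefinementOn (hV : ∀ v : V, v + v = 0) (β : V →+ V →+ W)
    (A : AddSubgroup V) [Finite A] (hβ : ∀ a ∈ A, β a a = 0) :
    ∃ f : V → W, IsQuadraticRefinementOn β A f := by
  classical
  suffices h : ∀ S : Finset V, (S : Set V) ⊆ A →
      ∃ f : V → W, IsQuadraticRefinementOn β (AddSubgroup.closure S) f by
    have hA : (A : Set V).Finite := Set.toFinite _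
    simpa [hA.coe_toFinset] using h hA.toFinset (by simp)
  intro S
  induction S using Finset.induction_on with
  | empty => exact fun _ => ⟨0, by simp [IsQuadraticRefinementOn]⟩
  | insert x S _ ih =>
    intro hS
    rw [Finset.coe_insert, Set.insert_subset_iff] at hS
    obtain ⟨f, hf⟩ := ih hS.2
    rw [Finset.coe_insert, Set.insert_eq, AddSubgroup.closure_union, sup_comm]
    refine hf.exists_sup_closure_singleton hV fun a ha => hβ a ?_
    rw [← AddSubgroup.closure_union] at ha
    exact (AddSubgroup.closure_le A).mpr (Set.union_subset hS.2 (by simpa using hS.1)) ha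

end QuadraticRefinement

section Suzuki

variable {F : Type*} [Field F] {q0 : ℕ}

@[simp]
lemma suzukiPsi_apply (a c : F) (p : F × F) :
    suzukiPsi q0 a c p = (p.1 + a, a ^ (2 * q0) * p.1 + p.2 + c) := rfl

lemma suzukiPsi_inj {a c a' c' : F} :
    suzukiPsi q0 a c = suzukiPsi q0 a' c' ↔ a = a' ∧ c = c' := by
  refine ⟨fun h => ?_, fun ⟨ha, hc⟩ => ha ▸ hc ▸ rfl⟩
  simpa using DFunLike.congr_fun h (0, 0)

lemma suzukiPsi_mul (hadd : ∀ x y : F, (x + y) ^ (2 * q0) = x ^ (2 * q0) + y ^ (2 * q0))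
    (a c a' c' : F) :
    suzukiPsi q0 a c * suzukiPsi q0 a' c' =
      suzukiPsi q0 (a + a') (a ^ (2 * q0) * a' + c + c') := by
  ext p <;> simp only [Equiv.Perm.coe_mul, Function.comp_apply, suzukiPsi_apply, hadd] <;> ring

lemma suzukiPsi_zero_zero (hadd : ∀ x y : F, (x + y) ^ (2 * q0) = x ^ (2 * q0) + y ^ (2 * q0)) :
    suzukiPsi q0 (0 : F) 0 = 1 := by
  have h0 : (0 : F) ^ (2 * q0) = 0 := by simpa using hadd 0 0
  ext p <;> simp [h0]

lemma suzukiPsi_inv (hadd : ∀ x y : F, (x + y) ^ (2 * q0) = x ^ (2 * q0) + y ^ (2 * q0))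
    (a c : F) : (suzukiPsi q0 a c)⁻¹ = suzukiPsi q0 (-a) (a ^ (2 * q0) * a - c) := by
  rw [inv_eq_iff_mul_eq_one, suzukiPsi_mul hadd, ← suzukiPsi_zero_zero hadd, suzukiPsi_inj]
  constructor <;> ring

variable (hadd : ∀ x y : F, (x + y) ^ (2 * q0) = x ^ (2 * q0) + y ^ (2 * q0))

def suzukiForm (B : AddSubgroup F) : F →+ F →+ F ⧸ B :=
  (AddMonoidHom.mul.comp (AddMonoidHom.mk' (· ^ (2 * q0)) hadd)).compr₂ (QuotientAddGroup.mk' B)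

@[simp]
lemma suzukiForm_apply (B : AddSubgroup F) (a b : F) :
    suzukiForm hadd B a b = ↑(a ^ (2 * q0) * b) :=
  rfl

variable {A B : AddSubgroup F} {f : F → F ⧸ B}

def suzukiSubgroup (hf : IsQuadraticRefinementOn (suzukiForm hadd B) A f) :
    Subgroup (Equiv.Perm (F × F)) where
  carrier := {g | ∃ a ∈ A, ∃ c : F, (c : F ⧸ B) = f a ∧ g = suzukiPsi q0 a c}
  one_mem' := ⟨0, A.zero_mem, 0, by rw [hf.map_zero]; rfl, (suzukiPsi_zero_zero hadd).symm⟩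
  mul_mem' := by
    rintro _ _ ⟨a, ha, c, hc, rfl⟩ ⟨a', ha', c', hc', rfl⟩
    refine ⟨a + a', A.add_mem ha ha', _, ?_, suzukiPsi_mul hadd a c a' c'⟩
    rw [hf a ha a' ha', suzukiForm_apply, QuotientAddGroup.mk_add, QuotientAddGroup.mk_add, hc, hc']
    abel
  inv_mem' := by
    rintro _ ⟨a, ha, c, hc, rfl⟩
    refine ⟨-a, A.neg_mem ha, _, ?_, suzukiPsi_inv hadd a c⟩
    rw [hf.map_neg ha, suzukiForm_apply, QuotientAddGroup.mk_sub, hc]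

variable {hadd}

lemma mem_suzukiSubgroup {hf : IsQuadraticRefinementOn (suzukiForm hadd B) A f}
    {g : Equiv.Perm (F × F)} :
    g ∈ suzukiSubgroup hadd hf ↔ ∃ a ∈ A, ∃ c : F, (c : F ⧸ B) = f a ∧ g = suzukiPsi q0 a c :=
  Iff.rfl

lemma suzukiPsi_mem_suzukiSubgroup {hf : IsQuadraticRefinementOn (suzukiForm hadd B) A f}
    {a c : F} : suzukiPsi q0 a c ∈ suzukiSubgroup hadd hf ↔ a ∈ A ∧ (c : F ⧸ B) = f a := by
  simp only [mem_suzukiSubgroup, suzukiPsi_inj]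
  constructor
  · rintro ⟨a, ha, c, hc, rfl, rfl⟩
    exact ⟨ha, hc⟩
  · rintro ⟨ha, hc⟩
    exact ⟨a, ha, c, hc, rfl, rfl⟩

lemma suzukiPsi_zero_mem_suzukiSubgroup (hf : IsQuadraticRefinementOn (suzukiForm hadd B) A f)
    (c : F) : suzukiPsi q0 0 c ∈ suzukiSubgroup hadd hf ↔ c ∈ B := by
  rw [suzukiPsi_mem_suzukiSubgroup, hf.map_zero, QuotientAddGroup.eq_zero_iff]
  exact and_iff_right A.zero_mem

lemma exists_suzukiPsi_mem_suzukiSubgroup (hf : IsQuadraticRefinementOn (suzukiForm hadd B) A f)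
    (a : F) : (∃ c : F, suzukiPsi q0 a c ∈ suzukiSubgroup hadd hf) ↔ a ∈ A := by
  simp only [suzukiPsi_mem_suzukiSubgroup]
  refine ⟨fun ⟨_, ha, _⟩ => ha, fun ha => ?_⟩
  obtain ⟨c, hc⟩ := QuotientAddGroup.mk_surjective (f a)
  exact ⟨c, ha, hc⟩

lemma card_suzukiSubgroup (hf : IsQuadraticRefinementOn (suzukiForm hadd B) A f) :
    Nat.card (suzukiSubgroup hadd hf) = Nat.card A * Nat.card B := by
  rw [← Nat.card_prod]
  set c₀ : F → F := fun a => (f a).out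
  have hc₀ (a : F) : (c₀ a : F ⧸ B) = f a := QuotientAddGroup.out_eq' (f a)
  let e : A × B → suzukiSubgroup hadd hf := fun p =>
    ⟨suzukiPsi q0 p.1 (c₀ p.1 + p.2), suzukiPsi_mem_suzukiSubgroup.mpr
      ⟨p.1.2, by rw [QuotientAddGroup.mk_add, hc₀, (QuotientAddGroup.eq_zero_iff _).mpr p.2.2,
        add_zero]⟩⟩
  refine (Nat.card_eq_of_bijective e ⟨fun p p' h => ?_, ?_⟩).symm
  · obtain ⟨ha, hb⟩ := suzukiPsi_inj.mp (congrArg Subtype.val h)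
    have ha : p.1 = p'.1 := Subtype.ext ha
    rw [ha, add_right_inj] at hb
    exact Prod.ext ha (Subtype.ext hb)
  · rintro ⟨_, a, ha, c, hc, rfl⟩
    refine ⟨(⟨a, ha⟩, ⟨c - c₀ a, ?_⟩), ?_⟩
    · rw [← QuotientAddGroup.eq_zero_iff, QuotientAddGroup.mk_sub, hc, hc₀, sub_self]
    · simp [e]

end Suzuki

theorem stmt_17_general (s : ℕ) (q0 q : ℕ) (hq0 : q0 = 2 ^ s) (hq : q = 2 * q0 ^ 2)
    (F : Type*) [Field F] [Fintype F] (hF : Fintype.card F = q)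
    (u v : ℕ) (hvu : v ≤ u)
    (B A : AddSubgroup F)
    (hB : Nat.card B = 2 ^ v) (hA : Nat.card A = 2 ^ (u - v))
    (hAB : ∀ a ∈ A, a ^ (2 * q0 + 1) ∈ B) :
    ∃ U : Subgroup (Equiv.Perm (F × F)),
      (∀ g ∈ U, ∃ a c : F, g = suzukiPsi q0 a c) ∧
      Nat.card U = 2 ^ u ∧
      (∀ c : F, suzukiPsi q0 0 c ∈ U ↔ c ∈ B) ∧
      (∀ a : F, (∃ c : F, suzukiPsi q0 a c ∈ U) ↔ a ∈ A) := by
  have : CharP F 2 := charP_of_card_eq_prime_pow (f := 2 * s + 1) (by rw [hF, hq, hq0]; ring)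
  have hadd (x y : F) : (x + y) ^ (2 * q0) = x ^ (2 * q0) + y ^ (2 * q0) := by
    rw [show 2 * q0 = 2 ^ (s + 1) by rw [hq0, pow_succ, mul_comm]]
    exact add_pow_char_pow x y 2 (s + 1)
  obtain ⟨f, hf⟩ := exists_isQuadraticRefinementOn CharTwo.add_self_eq_zero (suzukiForm hadd B) A
    fun a ha => by rw [suzukiForm_apply, QuotientAddGroup.eq_zero_iff, ← pow_succ]; exact hAB a ha
  refine ⟨suzukiSubgroup hadd hf, ?_, ?_, suzukiPsi_zero_mem_suzukiSubgroup hf,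
    exists_suzukiPsi_mem_suzukiSubgroup hf⟩
  · rintro _ ⟨a, -, c, -, rfl⟩
    exact ⟨a, c, rfl⟩
  · rw [card_suzukiSubgroup, hA, hB, ← pow_add, Nat.sub_add_cancel hvu]

/-- If `B, A` are additive subgroups of `F_q` of orders `2^v`, `2^{u-v}`
with `A^{2q₀+1} ⊆ B`, then there is a subgroup `U` of the Sylow 2-subgroup `T̄` of `Sz(q)`
of order `2^u` with `{c : ψ_{0,c} ∈ U} = B` and image `{a : ∃ c, ψ_{a,c} ∈ U} = A`. -/
theorem stmt_17 (s : ℕ) (hs : 1 ≤ s) (q0 q : ℕ) (hq0 : q0 = 2 ^ s) (hq : q = 2 * q0 ^ 2)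
    (F : Type*) [Field F] [Fintype F] (hF : Fintype.card F = q)
    (u v : ℕ) (hvu : v ≤ u)
    (B A : AddSubgroup F)
    (hB : Nat.card B = 2 ^ v) (hA : Nat.card A = 2 ^ (u - v))
    (hAB : ∀ a ∈ A, a ^ (2 * q0 + 1) ∈ B) :
    ∃ U : Subgroup (Equiv.Perm (F × F)),
      (∀ g ∈ U, ∃ a c : F, g = suzukiPsi q0 a c) ∧
      Nat.card U = 2 ^ u ∧
      (∀ c : F, suzukiPsi q0 0 c ∈ U ↔ c ∈ B) ∧
      (∀ a : F, (∃ c : F, suzukiPsi q0 a c ∈ U) ↔ a ∈ A) :=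
  stmt_17_general s q0 q hq0 hq F hF u v hvu B A hB hA hAB
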